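/- Let S : ℝⁿ → ℝᵏ be linear, U ∈ ℝⁿ, M ⊆ ℝⁿ nonempty, and ε ∈ (0,1). Assume the JL property: for all p, q ∈ (M - {U}) ∪ {0}, (1-ε)‖p-q‖² ≤ ‖Sp-Sq‖² ≤ (1+ε)‖p-q‖². If v_S ∈ M minimizes v ↦ ‖S U - S v‖² over M and v* ∈ M minimizes v ↦ ‖U - v‖² over M, then ‖U - v_S‖² ≤ ((1+ε)/(1-ε)) ‖U - v*‖². -/
import Mathlib


/-- JL surrogate theorem: the minimizer of the sketched squared-ℓ₂ loss on `M`
is nearly as good as the minimizer of the true loss, up to `(1+ε)/(1-ε)`. -/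
theorem stmt_1 {n k : ℕ}
    (S : EuclideanSpace ℝ (Fin n) →ₗ[ℝ] EuclideanSpace ℝ (Fin k))
    (U : EuclideanSpace ℝ (Fin n)) (M : Set (EuclideanSpace ℝ (Fin n)))
    (hM : M.Nonempty)
    (ε : ℝ) (hε0 : 0 < ε) (hε1 : ε < 1)
    (hJL : ∀ p ∈ ((fun m => m - U) '' M) ∪ {0},
           ∀ q ∈ ((fun m => m - U) '' M) ∪ {0},
      (1 - ε) * ‖p - q‖ ^ 2 ≤ ‖S p - S q‖ ^ 2 ∧
      ‖S p - S q‖ ^ 2 ≤ (1 + ε) * ‖p - q‖ ^ 2)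
    (vS : EuclideanSpace ℝ (Fin n)) (hvS : vS ∈ M)
    (hvSmin : ∀ v ∈ M, ‖S U - S vS‖ ^ 2 ≤ ‖S U - S v‖ ^ 2)
    (vStar : EuclideanSpace ℝ (Fin n)) (hvStar : vStar ∈ M)
    (hvStarmin : ∀ v ∈ M, ‖U - vStar‖ ^ 2 ≤ ‖U - v‖ ^ 2) :
    ‖U - vS‖ ^ 2 ≤ ((1 + ε) / (1 - ε)) * ‖U - vStar‖ ^ 2 := by
  have hmemS : vS - U ∈ (fun m => m - U) '' M ∪ {0} := Or.inl ⟨vS, hvS, rfl⟩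
  have hmemT : vStar - U ∈ (fun m => m - U) '' M ∪ {0} := Or.inl ⟨vStar, hvStar, rfl⟩
  have hmem0 : (0 : EuclideanSpace ℝ (Fin n)) ∈ (fun m => m - U) '' M ∪ {0} := Or.inr rfl
  have h1 := (hJL _ hmemS _ hmem0).1
  have h2 := (hJL _ hmemT _ hmem0).2
  simp only [map_sub, map_zero, sub_zero] at h1 h2
  have e1 : ‖vS - U‖ = ‖U - vS‖ := norm_sub_rev _ _
  have e2 : ‖vStar - U‖ = ‖U - vStar‖ := norm_sub_rev _ _
  have e3 : ‖S vS - S U‖ = ‖S U - S vS‖ := norm_sub_rev _ _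
  have e4 : ‖S vStar - S U‖ = ‖S U - S vStar‖ := norm_sub_rev _ _
  rw [e1, e3] at h1
  rw [e2, e4] at h2
  have hmid := hvSmin vStar hvStar
  have key : (1 - ε) * ‖U - vS‖ ^ 2 ≤ (1 + ε) * ‖U - vStar‖ ^ 2 := by
    linarith
  rw [div_mul_eq_mul_div, le_div_iff₀ (by linarith)]
  linarith
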